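/- arXiv:2402.17080 — 6 statements merged into one kernel-verified Lean document; each statement's English description precedes it below -/
import Mathlib

section
/- Let A > 0 and β = 4A/√3. Fix the edge {1,2} and set x_{12} = 3β, x_{ij} = β for all other edges {i,j} of the 4-simplex. Then this assignment solves the area-length system with all squared-area parameters equal to A²: for every triple i<j<k, 4x_{ij}x_{ik} − (x_{ij}+x_{ik}−x_{jk})² = 16A². -/
/-! In a triangle `i < j < k` only the edge `{i, j}` can be `{0, 1}`, so each triangle is either
equilateral with squared edge `β` or has squared edges `3β, β, β`. In both cases the left side
equals `3β²`, and `3β² = 16A²` because `β = 4A/√3`. -/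

theorem Finset.eq_and_eq_of_pair_eq_pair {α : Type*} [LinearOrder α] {i j a b : α}
    (hij : i < j) (hab : a < b) (h : ({i, j} : Finset α) = {a, b}) : i = a ∧ j = b := by
  rw [← Finset.coe_inj, Finset.coe_pair, Finset.coe_pair, Set.pair_eq_pair_iff] at h
  rcases h with h | ⟨rfl, rfl⟩
  · exact h
  · exact absurd hij (lt_asymm hab)

theorem Finset.pair_ne_of_right_notMem {α : Type*} [DecidableEq α] {a b : α} {s : Finset α}
    (hb : b ∉ s) : ({a, b} : Finset α) ≠ s :=
  fun h => hb (h ▸ Finset.mem_insert_of_mem (Finset.mem_singleton_self b))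

theorem three_mul_sq_eq_of_eq_div_sqrt_three {A β : ℝ} (hβ : β = 4 * A / Real.sqrt 3) :
    3 * β ^ 2 = 16 * A ^ 2 := by
  rw [hβ, div_pow, Real.sq_sqrt (by norm_num : (0 : ℝ) ≤ 3)]
  ring

theorem typeII_solution_general (A β : ℝ) (hβ : β = 4 * A / Real.sqrt 3)
    (x : Fin 5 → Fin 5 → ℝ)
    (h12 : x 0 1 = 3 * β)
    (hrest : ∀ i j : Fin 5, i ≠ j → ({i, j} : Finset (Fin 5)) ≠ {0, 1} → x i j = β) :
    ∀ i j k : Fin 5, i < j → j < k →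
      4 * x i j * x i k - (x i j + x i k - x j k)^2 = 16 * A^2 := by
  intro i j k hij hjk
  have hβA := three_mul_sq_eq_of_eq_div_sqrt_three hβ
  have hk : k ∉ ({0, 1} : Finset (Fin 5)) := by
    simp only [Finset.mem_insert, Finset.mem_singleton]
    omega
  have hik : x i k = β := hrest i k (hij.trans hjk).ne (Finset.pair_ne_of_right_notMem hk)
  have hjk' : x j k = β := hrest j k hjk.ne (Finset.pair_ne_of_right_notMem hk)
  by_cases h01 : ({i, j} : Finset (Fin 5)) = {0, 1}
  · obtain ⟨rfl, rfl⟩ := Finset.eq_and_eq_of_pair_eq_pair hij (by decide) h01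
    rw [h12, hik, hjk']
    linear_combination hβA
  · rw [hrest i j hij.ne h01, hik, hjk']
    linear_combination hβA

/-- Type II equi-area solution: `x₁₂ = 3β`, all other squared edge lengths `β`,
with `β = 4A/√3`, solves the area-length system with all squared areas `A²`. -/
theorem typeII_solution (A β : ℝ) (hA : 0 < A) (hβ : β = 4 * A / Real.sqrt 3)
    (x : Fin 5 → Fin 5 → ℝ)
    (hsym : ∀ i j, x i j = x j i)
    (h12 : x 0 1 = 3 * β)
    (hrest : ∀ i j : Fin 5, i ≠ j → ({i, j} : Finset (Fin 5)) ≠ {0, 1} → x i j = β) :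
    ∀ i j k : Fin 5, i < j → j < k →
      4 * x i j * x i k - (x i j + x i k - x j k)^2 = 16 * A^2 :=
  typeII_solution_general A β hβ x h12 hrest
end

section
/- Let A > 0 and β = 4A/√3. Set x_{12} = x_{45} = 3β and x_{ij} = β for all other edges. Then this assignment solves the area-length system of the 4-simplex with all squared-area parameters equal to A². -/
/-!
A triangle `{i, j, k}` of the 4-simplex contains at most one of the two disjoint edges
`{0, 1}` and `{3, 4}`, so two of its squared edge lengths are `β` and the third is `β` or
`3β`. The form `4ab - (a + b - c)²` equals `2(ab + bc + ca) - a² - b² - c²`, which is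
symmetric in `a, b, c`, and its value is `3β²` on `(β, β, β)` and on `(β, β, 3β)`;
finally `3β² = 16A²` for `β = 4A/√3`.
-/

namespace TypeIII

/-- Sixteen times the squared area of a triangle with squared edge lengths `a`, `b`, `c`. -/
def heronForm (a b c : ℝ) : ℝ := 4 * a * b - (a + b - c) ^ 2

lemma heronForm_eq_symmetric (a b c : ℝ) :
    heronForm a b c = 2 * (a * b + b * c + c * a) - (a ^ 2 + b ^ 2 + c ^ 2) := by
  unfold heronForm
  ring

lemma heronForm_eq_of_two_eq {β a b c : ℝ}
    (ha : a = β ∨ a = 3 * β) (hb : b = β ∨ b = 3 * β) (hc : c = β ∨ c = 3 * β)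
    (htwo : (a = β ∧ b = β) ∨ (a = β ∧ c = β) ∨ (b = β ∧ c = β)) :
    heronForm a b c = 3 * β ^ 2 := by
  rw [heronForm_eq_symmetric]
  rcases htwo with ⟨rfl, rfl⟩ | ⟨rfl, rfl⟩ | ⟨rfl, rfl⟩
  · rcases hc with rfl | rfl <;> ring
  · rcases hb with rfl | rfl <;> ring
  · rcases ha with rfl | rfl <;> ring

def IsLongEdge (i j : Fin 5) : Prop :=
  ({i, j} : Finset (Fin 5)) = {0, 1} ∨ ({i, j} : Finset (Fin 5)) = {3, 4}

instance : DecidableRel IsLongEdge := fun i j => by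
  unfold IsLongEdge
  infer_instance

lemma eq_of_isLongEdge_of_lt {i j : Fin 5} (h : IsLongEdge i j) (hij : i < j) :
    (i = 0 ∧ j = 1) ∨ (i = 3 ∧ j = 4) := by
  revert i j
  decide

lemma triangle_has_two_short_edges (i j k : Fin 5) (hij : i < j) (hjk : j < k) :
    (¬IsLongEdge i j ∧ ¬IsLongEdge i k) ∨ (¬IsLongEdge i j ∧ ¬IsLongEdge j k) ∨
      (¬IsLongEdge i k ∧ ¬IsLongEdge j k) := by
  revert i j k
  decide

section SquaredLengths

variable {β : ℝ} {x : Fin 5 → Fin 5 → ℝ}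

lemma sqLen_eq_of_not_isLongEdge
    (hrest : ∀ i j : Fin 5, i ≠ j → ({i, j} : Finset (Fin 5)) ≠ {0, 1} →
      ({i, j} : Finset (Fin 5)) ≠ {3, 4} → x i j = β)
    {i j : Fin 5} (hij : i < j) (h : ¬IsLongEdge i j) : x i j = β :=
  hrest i j hij.ne (not_or.1 h).1 (not_or.1 h).2

lemma sqLen_eq_or_eq (h12 : x 0 1 = 3 * β) (h45 : x 3 4 = 3 * β)
    (hrest : ∀ i j : Fin 5, i ≠ j → ({i, j} : Finset (Fin 5)) ≠ {0, 1} →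
      ({i, j} : Finset (Fin 5)) ≠ {3, 4} → x i j = β)
    {i j : Fin 5} (hij : i < j) : x i j = β ∨ x i j = 3 * β := by
  by_cases h : IsLongEdge i j
  · right
    obtain ⟨rfl, rfl⟩ | ⟨rfl, rfl⟩ := eq_of_isLongEdge_of_lt h hij
    exacts [h12, h45]
  · exact .inl (sqLen_eq_of_not_isLongEdge hrest hij h)

end SquaredLengths

end TypeIII

open TypeIII in
theorem typeIII_solution_general (A β : ℝ) (hβ : β = 4 * A / Real.sqrt 3)
    (x : Fin 5 → Fin 5 → ℝ)
    (h12 : x 0 1 = 3 * β) (h45 : x 3 4 = 3 * β)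
    (hrest : ∀ i j : Fin 5, i ≠ j → ({i, j} : Finset (Fin 5)) ≠ {0, 1} →
      ({i, j} : Finset (Fin 5)) ≠ {3, 4} → x i j = β) :
    ∀ i j k : Fin 5, i < j → j < k →
      4 * x i j * x i k - (x i j + x i k - x j k)^2 = 16 * A^2 := by
  have hβsq : 3 * β ^ 2 = 16 * A ^ 2 := by
    rw [hβ, div_pow, Real.sq_sqrt (by norm_num)]
    ring
  intro i j k hij hjk
  have hik := hij.trans hjk
  have short {p q : Fin 5} (hpq : p < q) : ¬IsLongEdge p q → x p q = β :=
    sqLen_eq_of_not_isLongEdge hrest hpq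
  rw [← hβsq]
  refine heronForm_eq_of_two_eq (sqLen_eq_or_eq h12 h45 hrest hij)
    (sqLen_eq_or_eq h12 h45 hrest hik) (sqLen_eq_or_eq h12 h45 hrest hjk) ?_
  rcases triangle_has_two_short_edges i j k hij hjk with ⟨h, h'⟩ | ⟨h, h'⟩ | ⟨h, h'⟩
  · exact .inl ⟨short hij h, short hik h'⟩
  · exact .inr (.inl ⟨short hij h, short hjk h'⟩)
  · exact .inr (.inr ⟨short hik h, short hjk h'⟩)

/-- Type III equi-area solution: `x₁₂ = x₄₅ = 3β` (two disjoint edges), all other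
squared edge lengths `β`, with `β = 4A/√3`, solves the area-length system with all
squared areas `A²`. -/
theorem typeIII_solution (A β : ℝ) (hA : 0 < A) (hβ : β = 4 * A / Real.sqrt 3)
    (x : Fin 5 → Fin 5 → ℝ)
    (hsym : ∀ i j, x i j = x j i)
    (h12 : x 0 1 = 3 * β) (h45 : x 3 4 = 3 * β)
    (hrest : ∀ i j : Fin 5, i ≠ j → ({i, j} : Finset (Fin 5)) ≠ {0, 1} →
      ({i, j} : Finset (Fin 5)) ≠ {3, 4} → x i j = β) :
    ∀ i j k : Fin 5, i < j → j < k →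
      4 * x i j * x i k - (x i j + x i k - x j k)^2 = 16 * A^2 :=
  typeIII_solution_general A β hβ x h12 h45 hrest
end

section
/- Let A ∈ ℝ, A ≠ 0, and let γ = (4A/√5)·i ∈ ℂ. Assign squared edge lengths on the 5-cycle: x_{12} = x_{23} = x_{34} = x_{45} = x_{15} = γ and on the complementary 5-cycle (the pentagram): x_{13} = x_{35} = x_{25} = x_{24} = x_{14} = −γ. Then this assignment solves the complex area-length system of the 4-simplex with all squared-area parameters equal to A², and it is non-real. -/
/-!
Write every squared edge length as `σ i j • γ` with `σ = +1` on the 5-cycle and `σ = -1` on the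
pentagram. The Heron form `4ab - (a + b - c)²` of `(a, b, c) = (α g, β g, ε g)` with signs
`α, β, ε = ±1` equals `(2(αβ + αε + βε) - 3) g²`, and `αβ + αε + βε = -1` as soon as the signs
are not all equal. No triangle of `K₅` lies inside the 5-cycle or inside the pentagram, so every
triangle gives `-5γ²`, which is `16A²` for `γ = (4A/√5) i`.
-/

open Complex

theorem heron_of_signs_not_all_equal {R : Type*} [CommRing R] (g α β ε : R)
    (hα : α ^ 2 = 1) (hβ : β ^ 2 = 1) (hε : ε ^ 2 = 1) (hsigns : α * β + α * ε + β * ε = -1) :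
    4 * (α * g) * (β * g) - (α * g + β * g - ε * g) ^ 2 = -5 * g ^ 2 := by
  linear_combination (g ^ 2) * (2 * hsigns - hα - hβ - hε)

/-- Subtraction in `Fin 5` is mod 5, so this is `+1` exactly on the 5-cycle `0-1-2-3-4-0`. -/
def pentagonSign (i j : Fin 5) : ℤ := if j - i = 1 ∨ i - j = 1 then 1 else -1

theorem pentagonSign_sq (i j : Fin 5) : pentagonSign i j ^ 2 = 1 := by
  unfold pentagonSign; split_ifs <;> norm_num

theorem pentagonSign_triangle :
    ∀ i j k : Fin 5, i < j → j < k →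
      pentagonSign i j * pentagonSign i k + pentagonSign i j * pentagonSign j k
        + pentagonSign i k * pentagonSign j k = -1 := by
  decide

theorem neg_five_mul_sq_div_sqrt_five_mul_I (r : ℝ) :
    -5 * (((r / Real.sqrt 5 : ℝ) : ℂ) * I) ^ 2 = (r : ℂ) ^ 2 := by
  have hsq : ((Real.sqrt 5 : ℝ) : ℂ) ^ 2 = 5 := by
    rw [← ofReal_pow, Real.sq_sqrt (by norm_num)]; norm_num
  have h5 : ((Real.sqrt 5 : ℝ) : ℂ) ≠ 0 := by exact_mod_cast (by positivity : Real.sqrt 5 ≠ 0)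
  push_cast
  field_simp
  linear_combination (-(r : ℂ) ^ 2) * hsq - 5 * (r : ℂ) ^ 2 * I_sq

theorem typeIV_solution_general (A : ℝ) (hA : A ≠ 0) (γ : ℂ)
    (hγ : γ = (4 * A / Real.sqrt 5 : ℝ) * Complex.I)
    (x : Fin 5 → Fin 5 → ℂ)
    (hc1 : x 0 1 = γ) (hc2 : x 1 2 = γ) (hc3 : x 2 3 = γ) (hc4 : x 3 4 = γ)
    (hc5 : x 0 4 = γ)
    (hp1 : x 0 2 = -γ) (hp2 : x 2 4 = -γ) (hp3 : x 1 4 = -γ) (hp4 : x 1 3 = -γ)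
    (hp5 : x 0 3 = -γ) :
    (∀ i j k : Fin 5, i < j → j < k →
      4 * x i j * x i k - (x i j + x i k - x j k)^2 = 16 * (A : ℂ)^2) ∧
    (∃ i j : Fin 5, (x i j).im ≠ 0) := by
  have hx : ∀ i j : Fin 5, i < j → x i j = pentagonSign i j * γ := by
    intro i j hij
    fin_cases i <;> fin_cases j <;> simp_all +decide [pentagonSign]
  refine ⟨fun i j k hij hjk => ?_, 0, 1, ?_⟩
  · rw [hx i j hij, hx i k (hij.trans hjk), hx j k hjk]
    have hγ_sq : -5 * γ ^ 2 = 16 * (A : ℂ) ^ 2 := by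
      rw [hγ, neg_five_mul_sq_div_sqrt_five_mul_I]; push_cast; ring
    rw [← hγ_sq]
    exact heron_of_signs_not_all_equal _ _ _ _ (mod_cast pentagonSign_sq i j)
      (mod_cast pentagonSign_sq i k) (mod_cast pentagonSign_sq j k)
      (mod_cast pentagonSign_triangle i j k hij hjk)
  · rw [hc1, hγ, im_ofReal_mul, I_im, mul_one]
    exact div_ne_zero (mul_ne_zero four_ne_zero hA) (by positivity)

/-- Type IV equi-area solution: squared edge lengths `γ = (4A/√5)·i` on a 5-cycle
and `−γ` on the complementary 5-cycle solve the complex area-length system with all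
squared areas `A²`, and this solution is non-real. -/
theorem typeIV_solution (A : ℝ) (hA : A ≠ 0) (γ : ℂ)
    (hγ : γ = (4 * A / Real.sqrt 5 : ℝ) * Complex.I)
    (x : Fin 5 → Fin 5 → ℂ)
    (hsym : ∀ i j, x i j = x j i)
    (hc1 : x 0 1 = γ) (hc2 : x 1 2 = γ) (hc3 : x 2 3 = γ) (hc4 : x 3 4 = γ)
    (hc5 : x 0 4 = γ)
    (hp1 : x 0 2 = -γ) (hp2 : x 2 4 = -γ) (hp3 : x 1 4 = -γ) (hp4 : x 1 3 = -γ)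
    (hp5 : x 0 3 = -γ) :
    (∀ i j k : Fin 5, i < j → j < k →
      4 * x i j * x i k - (x i j + x i k - x j k)^2 = 16 * (A : ℂ)^2) ∧
    (∃ i j : Fin 5, (x i j).im ≠ 0) :=
  typeIV_solution_general A hA γ hγ x hc1 hc2 hc3 hc4 hc5 hp1 hp2 hp3 hp4 hp5
end

section
/- There exists a choice of ten positive real squared-area parameters for which the area-length system of a 4-simplex has a solution in squared edge lengths that does NOT arise from any single global scaling of another solution; more precisely, with all areas equal to A > 0, both the equilateral solution (all x_{ij} = β) and the solution with x_{12} = 3β and other x_{ij} = β are positive real solutions, and they are distinct. Hence the map from (squared) edge lengths to (squared) areas of a 4-simplex is not injective even on positive real tuples. -/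
/-!
With `x_{ik} = x_{jk} = β`, the area equation of the triangle `ijk` reads
`4 t β - t² = 3 β²` in `t = x_{ij}`, a quadratic with the two roots `β` and `3β`.
Since `3 β² = 16 A²`, the equilateral tuple solves the system, and so does the tuple
in which the single edge `{0, 1}` is stretched to `3β`: for `i < j < k` the edge
`{0, 1}` can only occur as `{i, j}`.
-/

theorem four_mul_mul_sub_sq_eq_iff {R : Type*} [CommRing R] [IsDomain R] {t β : R} :
    4 * t * β - t ^ 2 = 3 * β ^ 2 ↔ t = β ∨ t = 3 * β := by
  have factor : 4 * t * β - t ^ 2 - 3 * β ^ 2 = -((t - β) * (t - 3 * β)) := by ring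
  rw [← sub_eq_zero, factor, neg_eq_zero, mul_eq_zero, sub_eq_zero, sub_eq_zero]

theorem Finset.pair_ne_pair_of_lt_of_covBy {α : Type*} [LinearOrder α] [DecidableEq α]
    {a b i j k : α} (hab : a ⋖ b) (hij : i < j) (hjk : j < k) :
    ({i, k} : Finset α) ≠ {a, b} := by
  intro h
  have hi : i ∈ ({a, b} : Finset α) := h ▸ Finset.mem_insert_self i {k}
  have hk : k ∈ ({a, b} : Finset α) :=
    h ▸ Finset.mem_insert_of_mem (Finset.mem_singleton_self k)
  simp only [Finset.mem_insert, Finset.mem_singleton] at hi hk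
  rcases hi with rfl | rfl <;> rcases hk with rfl | rfl
  · exact (hij.trans hjk).false
  · exact hab.2 hij hjk
  · exact (hab.1.trans (hij.trans hjk)).false
  · exact (hij.trans hjk).false

theorem Finset.pair_ne_pair_of_lt_of_isMin {α : Type*} [LinearOrder α] [DecidableEq α]
    {a b i j k : α} (ha : IsMin a) (hij : i < j) (hjk : j < k) :
    ({j, k} : Finset α) ≠ {a, b} := by
  intro h
  have hj : j ∈ ({a, b} : Finset α) := h ▸ Finset.mem_insert_self j {k}
  have ha' : a ∈ ({j, k} : Finset α) := h.symm ▸ Finset.mem_insert_self a {b}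
  simp only [Finset.mem_insert, Finset.mem_singleton] at hj ha'
  rcases ha' with rfl | rfl
  · exact ha.not_lt hij
  · exact ha.not_lt (hij.trans hjk)

/-- The map from squared edge lengths to squared areas of a 4-simplex is not
injective on positive real tuples: with all squared areas equal to `A² > 0`, both
the equilateral tuple (all `x_{ij} = β`) and the tuple with `x₁₂ = 3β`, other
entries `β`, are positive real solutions of the area-length system, and they are
distinct. -/
theorem areas_not_injective :
    ∃ (A β : ℝ) (x₁ x₂ : Fin 5 → Fin 5 → ℝ),
      0 < A ∧ β = 4 * A / Real.sqrt 3 ∧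
      (∀ i j, x₁ i j = β) ∧
      (∀ i j, x₂ i j = if ({i, j} : Finset (Fin 5)) = {0, 1} then 3 * β else β) ∧
      (∀ i j : Fin 5, i ≠ j → 0 < x₁ i j) ∧
      (∀ i j : Fin 5, i ≠ j → 0 < x₂ i j) ∧
      (∀ i j k : Fin 5, i < j → j < k →
        4 * x₁ i j * x₁ i k - (x₁ i j + x₁ i k - x₁ j k)^2 = 16 * A^2) ∧
      (∀ i j k : Fin 5, i < j → j < k →
        4 * x₂ i j * x₂ i k - (x₂ i j + x₂ i k - x₂ j k)^2 = 16 * A^2) ∧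
      x₁ ≠ x₂ := by
  set β : ℝ := 4 * 1 / Real.sqrt 3
  have hβ_pos : 0 < β := by positivity
  have hβ_sq : 16 * (1 : ℝ) ^ 2 = 3 * β ^ 2 := by
    rw [div_pow, Real.sq_sqrt zero_le_three]
    ring
  set x₂ : Fin 5 → Fin 5 → ℝ :=
    fun i j ↦ if ({i, j} : Finset (Fin 5)) = {0, 1} then 3 * β else β
  have hx₂_pos (i j : Fin 5) : 0 < x₂ i j := by
    simp only [x₂]
    split_ifs <;> positivity
  have hx₂_area (i j k : Fin 5) (hij : i < j) (hjk : j < k) :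
      4 * x₂ i j * x₂ i k - (x₂ i j + x₂ i k - x₂ j k) ^ 2 = 16 * 1 ^ 2 := by
    have h01 : (0 : Fin 5) ⋖ 1 := Fin.covBy_iff.2 (Order.covBy_add_one 0)
    have hx₂_ik : x₂ i k = β := if_neg (Finset.pair_ne_pair_of_lt_of_covBy h01 hij hjk)
    have hx₂_jk : x₂ j k = β := if_neg (Finset.pair_ne_pair_of_lt_of_isMin isMin_bot hij hjk)
    rw [hx₂_ik, hx₂_jk, add_sub_cancel_right, hβ_sq, four_mul_mul_sub_sq_eq_iff]
    simp only [x₂]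
    split_ifs <;> simp
  refine ⟨1, β, fun _ _ ↦ β, x₂, one_pos, rfl, fun _ _ ↦ rfl, fun _ _ ↦ rfl,
    fun _ _ _ ↦ hβ_pos, fun i j _ ↦ hx₂_pos i j,
    fun _ _ _ _ _ ↦ by linear_combination -hβ_sq, hx₂_area, fun h ↦ ?_⟩
  have hβ_eq : β = 3 * β := by simpa [x₂] using congrFun (congrFun h 0) 1
  linarith
end

section
/- For real numbers a, b, c: if 4ab − (a+b−c)² > 0, then a, b, c are all strictly positive or all strictly negative. -/
/-! The Heron form `4ab - (a + b - c)²` is at most `4ab` and is invariant under cyclic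
permutation of `(a, b, c)`, so its positivity forces both `ab > 0` and `bc > 0`. -/

theorem four_mul_sub_sq_rotate {R : Type*} [CommRing R] (a b c : R) :
    4 * a * b - (a + b - c) ^ 2 = 4 * b * c - (b + c - a) ^ 2 := by
  ring

section

variable {R : Type*} [CommRing R] [LinearOrder R] [IsStrictOrderedRing R]

theorem mul_pos_of_four_mul_sub_sq_pos {a b d : R} (h : 0 < 4 * a * b - d ^ 2) :
    0 < a * b := by
  nlinarith [sq_nonneg d]

theorem same_sign_of_mul_pos {a b c : R} (hab : 0 < a * b) (hbc : 0 < b * c) :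
    (0 < a ∧ 0 < b ∧ 0 < c) ∨ (a < 0 ∧ b < 0 ∧ c < 0) := by
  rcases mul_pos_iff.mp hab with ⟨ha, hb⟩ | ⟨ha, hb⟩
  · exact Or.inl ⟨ha, hb, pos_of_mul_pos_right hbc hb.le⟩
  · exact Or.inr ⟨ha, hb, neg_of_mul_pos_right hbc hb.le⟩

end

/-- Single-triangle positivity: if `4ab − (a+b−c)² > 0` for reals `a,b,c`, then
`a,b,c` are all strictly positive or all strictly negative. -/
theorem heron_pos_signs (a b c : ℝ) (h : 0 < 4*a*b - (a + b - c)^2) :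
    (0 < a ∧ 0 < b ∧ 0 < c) ∨ (a < 0 ∧ b < 0 ∧ c < 0) := by
  have hab : 0 < a * b := mul_pos_of_four_mul_sub_sq_pos h
  have hbc : 0 < b * c := mul_pos_of_four_mul_sub_sq_pos (four_mul_sub_sq_rotate a b c ▸ h)
  exact same_sign_of_mul_pos hab hbc
end

section
/- Let β > 0 and consider the squared edge lengths with x_{12} = 3β and x_{ij} = β otherwise (type II equi-area solution). Then the Gram matrix M with m_{ij} = ½(x_{i5}+x_{j5}−x_{ij}) has signature (−,+,+,+) (exactly one negative eigenvalue and three positive); hence this solution satisfies the Lorentzian (Minkowski ℝ^{1,3}) 4-simplex realizability condition but not the Euclidean one. -/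
/-!
`M` decomposes along the orthogonal vectors `(1,-1,0,0)`, `(0,0,1,-1)` and the plane of vectors
`(a,a,b,b)`: the first two are eigenvectors with eigenvalues `3β/2` and `β/2`, and on the plane
`M` acts as `β [[1/2, 1], [1, 3/2]]`, whose eigenvalues `(1 ± √5/2) β` have opposite signs since
`√5 > 2`. So the characteristic polynomial of `M` splits with exactly one negative root, and the
eigenvalues of a Hermitian matrix are the roots of its characteristic polynomial.
-/

open Polynomial Matrix Finset

theorem Matrix.IsHermitian.card_filter_eigenvalues_eq_countP_roots {𝕜 n : Type*} [RCLike 𝕜]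
    [Fintype n] [DecidableEq n] {A : Matrix n n 𝕜} (hA : A.IsHermitian) (p : ℝ → Prop)
    [DecidablePred p] :
    #{i | p (hA.eigenvalues i)} = (A.charpoly.roots.map RCLike.re).countP p := by
  rw [hA.roots_charpoly_eq_eigenvalues, Multiset.map_map, Multiset.countP_map]
  simp [Finset.card, Finset.filter_val]

noncomputable def typeIIGram (β : ℝ) : Matrix (Fin 4) (Fin 4) ℝ :=
  !![β, -β/2, β/2, β/2; -β/2, β, β/2, β/2; β/2, β/2, β, β/2; β/2, β/2, β/2, β]

theorem eq_typeIIGram_of_apply {β : ℝ} {M : Matrix (Fin 4) (Fin 4) ℝ}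
    (hM : ∀ i j : Fin 4, M i j =
      if i = j then β else if ({i, j} : Finset (Fin 4)) = {0, 1} then -β / 2 else β / 2) :
    M = typeIIGram β := by
  ext i j
  fin_cases i <;> fin_cases j <;> simp +decide [typeIIGram, hM]

theorem isHermitian_typeIIGram (β : ℝ) : (typeIIGram β).IsHermitian := by
  ext i j
  fin_cases i <;> fin_cases j <;> simp [typeIIGram]

theorem charpoly_typeIIGram (β : ℝ) : (typeIIGram β).charpoly =
    (X - C (β / 2)) * (X - C (3 * β / 2)) * (X - C ((1 + √5 / 2) * β)) *
      (X - C ((1 - √5 / 2) * β)) := by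
  refine Polynomial.funext fun μ => ?_
  have hsq : √5 ^ 2 = 5 := Real.sq_sqrt (by norm_num)
  have hres : scalar (Fin 4) μ - typeIIGram β = !![μ - β, β/2, -β/2, -β/2;
      β/2, μ - β, -β/2, -β/2; -β/2, -β/2, μ - β, -β/2; -β/2, -β/2, -β/2, μ - β] := by
    ext i j
    fin_cases i <;> fin_cases j <;> simp [typeIIGram] <;> ring
  rw [eval_charpoly, hres]
  simp only [norm_det, eval_mul, eval_sub, eval_X, eval_C]
  linear_combination (μ - β / 2) * (μ - 3 * β / 2) * β ^ 2 / 4 * hsq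

theorem roots_charpoly_typeIIGram (β : ℝ) : (typeIIGram β).charpoly.roots =
    {β / 2, 3 * β / 2, (1 + √5 / 2) * β, (1 - √5 / 2) * β} := by
  rw [charpoly_typeIIGram]
  simp only [roots_mul, mul_ne_zero_iff, X_sub_C_ne_zero, roots_X_sub_C, ne_eq,
    not_false_eq_true, and_self]
  rfl

/-- The Gram matrix of the type II equi-area solution (`x₁₂ = 3β`, other squared
edge lengths `β`, with `β > 0`) has signature `(−,+,+,+)`: exactly one negative and
three positive eigenvalues; in particular it is not positive definite, so the
solution is Lorentzian but not Euclidean. -/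
theorem typeII_gram_lorentzian (β : ℝ) (hβ : 0 < β)
    (M : Matrix (Fin 4) (Fin 4) ℝ)
    (hM : ∀ i j : Fin 4, M i j =
      if i = j then β
      else if ({i, j} : Finset (Fin 4)) = {0, 1} then -β / 2 else β / 2) :
    ∃ hHerm : M.IsHermitian,
      (Finset.univ.filter (fun i => hHerm.eigenvalues i < 0)).card = 1 ∧
      (Finset.univ.filter (fun i => 0 < hHerm.eigenvalues i)).card = 3 ∧
      ¬ M.PosDef := by
  obtain rfl := eq_typeIIGram_of_apply hM
  have hA := isHermitian_typeIIGram β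
  have hsqrt : 2 < √5 := by rw [Real.lt_sqrt] <;> norm_num
  have h₁ : 0 < β / 2 := by positivity
  have h₃ : 0 < 3 * β / 2 := by positivity
  have hplus : 0 < (1 + √5 / 2) * β := by positivity
  have hminus : (1 - √5 / 2) * β < 0 := mul_neg_of_neg_of_pos (by linarith) hβ
  have hneg : #{i | hA.eigenvalues i < 0} = 1 := by
    rw [hA.card_filter_eigenvalues_eq_countP_roots (· < 0), roots_charpoly_typeIIGram]
    simp [← Multiset.cons_zero, hminus, h₁.not_gt, h₃.not_gt, hplus.not_gt]
  refine ⟨hA, hneg, ?_, fun hpd => ?_⟩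
  · rw [hA.card_filter_eigenvalues_eq_countP_roots (0 < ·), roots_charpoly_typeIIGram]
    simp [← Multiset.cons_zero, h₁, h₃, hplus, hminus.not_gt]
  · obtain ⟨i, hi⟩ := Finset.card_pos.mp (hneg ▸ Nat.one_pos)
    exact (hpd.eigenvalues_pos i).not_gt (Finset.mem_filter.mp hi).2
end
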